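/- arXiv:0802.0159 — 2 statements merged into one kernel-verified Lean document; each statement's English description precedes it below -/
import Mathlib

section
/- Let D ⊂ ℂⁿ be a bounded domain with connected smooth boundary, L ⊂ ∂D compact with A(D)-hull ĤL satisfying ĤL ∩ ∂D = L. If ∂D ∖ L is connected, then D ∖ ĤL is connected. -/
open Complex Metric Set

noncomputable section

/-- The algebra `A(D) = C⁰(closure D) ∩ O(D)` of functions continuous on `closure D`
and holomorphic on `D`. -/
def Aalg (n : ℕ) (D : Set (EuclideanSpace ℂ (Fin n))) :
    Set (EuclideanSpace ℂ (Fin n) → ℂ) :=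
  {f | ContinuousOn f (closure D) ∧ DifferentiableOn ℂ f D}

/-- The `A(D)`-envelope (hull) of a subset `L` of `closure D`:
`ĤL = {z ∈ closure D : |f(z)| ≤ max_L |f| ∀ f ∈ A(D)}`. -/
def hullA (n : ℕ) (D L : Set (EuclideanSpace ℂ (Fin n))) :
    Set (EuclideanSpace ℂ (Fin n)) :=
  {z ∈ closure D | ∀ f ∈ Aalg n D, ‖f z‖ ≤ sSup ((fun w => ‖f w‖) '' L)}

/-- `D` has smooth boundary: it is globally defined by a smooth function `ρ` with
non-vanishing differential along `∂D`. -/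
def HasSmoothBoundary (n : ℕ) (D : Set (EuclideanSpace ℂ (Fin n))) : Prop :=
  ∃ ρ : EuclideanSpace ℂ (Fin n) → ℝ, ContDiff ℝ (⊤ : ℕ∞) ρ ∧
    D = {x | ρ x < 0} ∧ ∀ x ∈ frontier D, fderiv ℝ ρ x ≠ 0


/-!
Write `K` for the hull and `U = D ∖ K`; `K` is closed and misses `∂D ∖ L`. If `U` split into two
relatively clopen pieces, each piece would reach `∂D ∖ L`: otherwise its frontier would lie in
`K`, and the maximum modulus principle would put the whole piece into `K`. Near a point of
`∂D ∖ L` the ball avoids `K`, and smoothness of `∂D` lets one push all nearby points of `D` along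
a fixed inward direction into one small ball inside `D`; so locally `U` lies in a single
preconnected set, and the closures of the two pieces are disjoint on `∂D ∖ L`. They would then
split the connected set `∂D ∖ L` into two nonempty closed parts.
-/

open Filter Topology

theorem IsOpen.isPreconnected_of_preconnected_edge {X : Type*} [TopologicalSpace X]
    {U B : Set X} (hU : IsOpen U) (hB : IsPreconnected B) (hBU : B ⊆ closure U)
    (hloc : ∀ p ∈ B, ∃ N ∈ 𝓝 p, ∃ C ⊆ U, IsPreconnected C ∧ N ∩ U ⊆ C)
    (hreach : ∀ V ⊆ U, IsOpen V → closure V ∩ U ⊆ V → V.Nonempty → (closure V ∩ B).Nonempty) :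
    IsPreconnected U := by
  intro s t hs ht hUst hUs hUt
  by_contra hdisj
  have piece_closed : ∀ {a b : Set X}, IsOpen b → U ⊆ a ∪ b → ¬(U ∩ (a ∩ b)).Nonempty →
      closure (U ∩ a) ∩ U ⊆ U ∩ a := by
    intro a b hb hUab hab z ⟨hza, hzU⟩
    refine ⟨hzU, (hUab hzU).resolve_right fun hzb => hab ?_⟩
    obtain ⟨w, hwb, hwU, hwa⟩ := mem_closure_iff.mp hza b hb hzb
    exact ⟨w, hwU, hwa, hwb⟩
  have hcover : B ⊆ closure (U ∩ s) ∪ closure (U ∩ t) := by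
    rw [← closure_union, ← inter_union_distrib_left, inter_eq_left.mpr hUst]
    exact hBU
  obtain ⟨p, hpB, hps, hpt⟩ := isPreconnected_closed_iff.mp hB _ _ isClosed_closure
    isClosed_closure hcover
    (inter_comm B _ ▸ hreach _ inter_subset_left (hU.inter hs) (piece_closed ht hUst hdisj) hUs)
    (inter_comm B _ ▸ hreach _ inter_subset_left (hU.inter ht)
      (piece_closed hs (union_comm s t ▸ hUst) (inter_comm s t ▸ hdisj)) hUt)
  obtain ⟨N, hN, C, hCU, hC, hNC⟩ := hloc p hpB
  obtain ⟨x, hxN, hxU, hxs⟩ := mem_closure_iff_nhds.mp hps N hN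
  obtain ⟨y, hyN, hyU, hyt⟩ := mem_closure_iff_nhds.mp hpt N hN
  obtain ⟨z, hzC, hzst⟩ := hC s t hs ht (hCU.trans hUst) ⟨x, hNC ⟨hxN, hxU⟩, hxs⟩
    ⟨y, hNC ⟨hyN, hyU⟩, hyt⟩
  exact hdisj ⟨z, hCU hzC, hzst⟩

section SmoothBoundary

variable {E : Type*} [NormedAddCommGroup E] [NormedSpace ℝ E] {ρ : E → ℝ} {p : E}

theorem strictAntiOn_comp_segment (hρ : Differentiable ℝ ρ) {x y : E}
    (hneg : ∀ z ∈ segment ℝ x y, fderiv ℝ ρ z (y - x) < 0) :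
    StrictAntiOn (fun t : ℝ => ρ (x + t • (y - x))) (Icc 0 1) := by
  have hderiv : ∀ t : ℝ, HasDerivAt (fun t : ℝ => ρ (x + t • (y - x)))
      (fderiv ℝ ρ (x + t • (y - x)) (y - x)) t := fun t =>
    (hρ _).hasFDerivAt.comp_hasDerivAt t
      (by simpa using ((hasDerivAt_id t).smul_const (y - x)).const_add x)
  refine strictAntiOn_of_deriv_neg (convex_Icc 0 1)
    (fun t _ => (hderiv t).continuousAt.continuousWithinAt) fun t ht => ?_
  rw [(hderiv t).deriv]
  exact hneg _ (segment_eq_image' ℝ x y ▸ mem_image_of_mem _ (interior_subset ht))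

theorem descent_along_segment (hρ : Differentiable ℝ ρ) {x w : E}
    (hneg : ∀ z ∈ segment ℝ x (x + w), fderiv ℝ ρ z w < 0) :
    (∀ z ∈ segment ℝ x (x + w), ρ z ≤ ρ x) ∧ ρ (x + w) < ρ x := by
  have hanti := strictAntiOn_comp_segment hρ (x := x) (y := x + w)
    (by simpa only [add_sub_cancel_left] using hneg)
  simp only [add_sub_cancel_left] at hanti
  refine ⟨fun z hz => ?_, by
    simpa using hanti (left_mem_Icc.2 zero_le_one) (right_mem_Icc.2 zero_le_one) zero_lt_one⟩
  rw [segment_eq_image'] at hz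
  obtain ⟨θ, hθ, rfl⟩ := hz
  simpa using hanti.antitoneOn (left_mem_Icc.2 zero_le_one) hθ hθ.1

theorem exists_uniform_descent_direction (hρ : ContDiff ℝ 1 ρ) (hdp : fderiv ℝ ρ p ≠ 0)
    {ε : ℝ} (hε : 0 < ε) :
    ∃ R ∈ Ioc 0 ε, ∃ w : E, ‖w‖ < R / 2 ∧ ∀ z ∈ ball p R, fderiv ℝ ρ z w < 0 := by
  obtain ⟨v₀, hv₀⟩ : ∃ v, fderiv ℝ ρ p v ≠ 0 := by
    by_contra! h
    exact hdp (ContinuousLinearMap.ext h)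
  set v := -(fderiv ℝ ρ p v₀) • v₀
  have hpv : fderiv ℝ ρ p v < 0 := by
    simpa [v] using mul_self_pos.mpr hv₀
  have hv : 0 < ‖v‖ := norm_pos_iff.mpr fun h => hpv.ne (by simp [h])
  have hcont : Continuous fun z => fderiv ℝ ρ z v :=
    (hρ.continuous_fderiv one_ne_zero).clm_apply continuous_const
  obtain ⟨R₁, hR₁, hball⟩ := Metric.isOpen_iff.mp (isOpen_lt hcont continuous_const) p hpv
  set R := min R₁ ε
  have hR : 0 < R := lt_min hR₁ hε
  refine ⟨R, ⟨hR, min_le_right _ _⟩, (R / (4 * ‖v‖)) • v, ?_, fun z hz => ?_⟩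
  · rw [norm_smul, Real.norm_of_nonneg (by positivity)]
    field_simp
    linarith
  · rw [map_smul, smul_eq_mul]
    exact mul_neg_of_pos_of_neg (by positivity)
      (hball (ball_subset_ball (min_le_left _ _) hz))

theorem exists_preconnected_of_fderiv_ne_zero (hρ : ContDiff ℝ 1 ρ) (hp : ρ p ≤ 0)
    (hdp : fderiv ℝ ρ p ≠ 0) {ε : ℝ} (hε : 0 < ε) :
    ∃ r > 0, ∃ C ⊆ ball p ε ∩ {x | ρ x < 0}, IsPreconnected C ∧
      ball p r ∩ {x | ρ x < 0} ⊆ C := by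
  have hρd : Differentiable ℝ ρ := hρ.differentiable one_ne_zero
  obtain ⟨R, ⟨hR, hRε⟩, w, hw, hdesc⟩ := exists_uniform_descent_direction hρ hdp hε
  have hflow : ∀ x ∈ ball p R, x + w ∈ ball p R →
      (∀ z ∈ segment ℝ x (x + w), ρ z ≤ ρ x) ∧ ρ (x + w) < ρ x := fun x hx hxw =>
    descent_along_segment hρd fun z hz => hdesc z ((convex_ball p R).segment_subset hx hxw hz)
  set q := p + w
  have hwR : ∀ x, dist x p < R / 2 → x + w ∈ ball p R := fun x hx => by
    rw [mem_ball]
    calc dist (x + w) p ≤ dist (x + w) x + dist x p := dist_triangle _ _ _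
      _ < R / 2 + R / 2 := by rw [dist_self_add_left]; linarith
      _ = R := by ring
  have hq : ρ q < 0 :=
    ((hflow p (mem_ball_self hR) (hwR p (by simpa using half_pos hR))).2).trans_le hp
  obtain ⟨δ, hδ, hδq⟩ := Metric.isOpen_iff.mp (isOpen_lt hρ.continuous continuous_const) q hq
  set r := min δ (R / 2)
  have hr : 0 < r := lt_min hδ (half_pos hR)
  have hxq : ∀ x ∈ ball p r, x + w ∈ ball q r := fun x hx => by
    rwa [mem_ball, dist_add_right]
  have hrR : ball p r ⊆ ball p R :=
    ball_subset_ball ((min_le_right _ _).trans (half_le_self hR.le))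
  have hqr : ball q r ⊆ ball p R ∩ {x | ρ x < 0} := fun z hz => by
    refine ⟨?_, hδq (ball_subset_ball (min_le_left _ _) hz)⟩
    calc dist z p ≤ dist z q + dist q p := dist_triangle _ _ _
      _ < R / 2 + R / 2 := by
        rw [dist_self_add_left]
        exact add_lt_add_of_lt_of_lt (hz.trans_le (min_le_right _ _)) hw
      _ = R := by ring
  -- each segment from `x` to `x + w` stays in `{ρ < 0}` and ends in `ball q r`
  refine ⟨r, hr, ⋃₀ ((fun x => segment ℝ x (x + w) ∪ ball q r) '' (ball p r ∩ {x | ρ x < 0})),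
    ?_, isPreconnected_sUnion q _ ?_ ?_, fun x hx => ⟨_, mem_image_of_mem _ hx,
      Or.inl (left_mem_segment ℝ x (x + w))⟩⟩
  · rintro z ⟨_, ⟨x, ⟨hxr, hxρ⟩, rfl⟩, hz | hz⟩
    · have hxw := hwR x ((mem_ball.mp hxr).trans_le (min_le_right _ _))
      exact ⟨ball_subset_ball hRε ((convex_ball p R).segment_subset (hrR hxr) hxw hz),
        ((hflow x (hrR hxr) hxw).1 z hz).trans_lt hxρ⟩
    · exact ⟨ball_subset_ball hRε (hqr hz).1, (hqr hz).2⟩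
  · rintro _ ⟨x, -, rfl⟩
    exact Or.inr (mem_ball_self hr)
  · rintro _ ⟨x, ⟨hxr, -⟩, rfl⟩
    exact (convex_segment x (x + w)).isPreconnected.union (x + w)
      (right_mem_segment ℝ x (x + w)) (hxq x hxr) (convex_ball q r).isPreconnected

end SmoothBoundary

section Hull

variable {n : ℕ} {D L : Set (EuclideanSpace ℂ (Fin n))}

theorem isClosed_hullA : IsClosed (hullA n D L) := by
  refine isClosed_of_closure_subset fun z hz => ?_
  refine ⟨closure_minimal (fun _ h => h.1) isClosed_closure hz, fun f hf => ?_⟩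
  have hsub : hullA n D L ⊆
      closure D ∩ (fun w => ‖f w‖) ⁻¹' Iic (sSup ((fun w => ‖f w‖) '' L)) :=
    fun _ hw => ⟨hw.1, hw.2 f hf⟩
  exact (closure_minimal hsub
    (hf.1.norm.preimage_isClosed_of_isClosed isClosed_closure isClosed_Iic) hz).2

theorem subset_hullA (hD : Bornology.IsBounded D) (hL : L ⊆ closure D) : L ⊆ hullA n D L :=
  fun _ hz => ⟨hL hz, fun _ hf => le_csSup
    ((hD.isCompact_closure.image_of_continuousOn hf.1.norm).bddAbove.mono (image_mono hL))
    (mem_image_of_mem _ hz)⟩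

theorem subset_hullA_of_frontier_subset [Nontrivial (EuclideanSpace ℂ (Fin n))]
    (hD : Bornology.IsBounded D) {V : Set (EuclideanSpace ℂ (Fin n))} (hVD : V ⊆ D)
    (hV : frontier V ⊆ hullA n D L) : V ⊆ hullA n D L :=
  fun _ hz => ⟨subset_closure (hVD hz), fun f hf =>
    Complex.norm_le_of_forall_mem_frontier_norm_le (hD.subset hVD)
      ⟨hf.2.mono hVD, hf.1.mono (closure_mono hVD)⟩ (fun _ hw => (hV hw).2 f hf)
      (subset_closure hz)⟩

theorem nonempty_closure_inter_frontier_diff [Nontrivial (EuclideanSpace ℂ (Fin n))]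
    (hDopen : IsOpen D) (hDbd : Bornology.IsBounded D) (hL : L ⊆ frontier D)
    {V : Set (EuclideanSpace ℂ (Fin n))} (hVU : V ⊆ D \ hullA n D L) (hVo : IsOpen V)
    (hVcl : closure V ∩ (D \ hullA n D L) ⊆ V) (hV : V.Nonempty) :
    (closure V ∩ (frontier D \ L)).Nonempty := by
  by_contra hempty
  obtain ⟨x, hx⟩ := hV
  refine (hVU hx).2 (subset_hullA_of_frontier_subset hDbd (hVU.trans sdiff_subset) ?_ hx)
  intro z hz
  rw [hVo.frontier_eq] at hz
  by_cases hzD : z ∈ D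
  · by_contra hzK
    exact hz.2 (hVcl ⟨hz.1, hzD, hzK⟩)
  · have hzfr : z ∈ frontier D :=
      hDopen.frontier_eq ▸ ⟨closure_mono (hVU.trans sdiff_subset) hz.1, hzD⟩
    refine subset_hullA hDbd (hL.trans frontier_subset_closure) ?_
    by_contra hzL
    exact hempty ⟨z, hz.1, hzfr, hzL⟩

end Hull

theorem complement_of_hull_connected_general (n : ℕ)
    (D L : Set (EuclideanSpace ℂ (Fin n)))
    (hDopen : IsOpen D) (hDbd : Bornology.IsBounded D)
    (hDsmooth : HasSmoothBoundary n D)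
    (hL : L ⊆ frontier D)
    (hhull : hullA n D L ∩ frontier D = L)
    (hconn : IsConnected (frontier D \ L)) :
    IsConnected (D \ hullA n D L) := by
  have hK : IsClosed (hullA n D L) := isClosed_hullA
  have hB : frontier D \ L ⊆ closure D \ hullA n D L := fun p hp =>
    ⟨frontier_subset_closure hp.1, fun hpK => hp.2 (hhull ▸ ⟨hpK, hp.1⟩)⟩
  have hBU : frontier D \ L ⊆ closure (D \ hullA n D L) := fun p hp => by
    rw [Set.sdiff_eq, inter_comm]
    exact hK.isOpen_compl.inter_closure ⟨(hB hp).2, (hB hp).1⟩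
  have : Nontrivial (EuclideanSpace ℂ (Fin n)) := by
    obtain ⟨⟨x, hx⟩, hD⟩ := nonempty_frontier_iff.mp (hconn.nonempty.mono sdiff_subset)
    obtain ⟨y, hy⟩ := ne_univ_iff_exists_notMem D |>.mp hD
    exact nontrivial_of_ne x y (ne_of_mem_of_not_mem hx hy)
  refine ⟨closure_nonempty_iff.mp (hconn.nonempty.mono hBU),
    (hDopen.sdiff hK).isPreconnected_of_preconnected_edge hconn.isPreconnected hBU ?_
      fun V => nonempty_closure_inter_frontier_diff hDopen hDbd hL⟩
  intro p hp
  obtain ⟨ρ, hρ, rfl, hdρ⟩ := hDsmooth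
  obtain ⟨ε, hε, hεK⟩ := Metric.isOpen_iff.mp hK.isOpen_compl p (hB hp).2
  have hρp : ρ p ≤ 0 := closure_lt_subset_le hρ.continuous continuous_const (hB hp).1
  have hρ₁ : ContDiff ℝ 1 ρ := hρ.of_le (by exact_mod_cast le_top)
  obtain ⟨r, hr, C, hC, hCpre, hrC⟩ :=
    exists_preconnected_of_fderiv_ne_zero hρ₁ hρp (hdρ p hp.1) hε
  exact ⟨ball p r, ball_mem_nhds p hr, C, fun z hz => ⟨(hC hz).2, hεK (hC hz).1⟩,
    hCpre, fun z hz => hrC ⟨hz.1, hz.2.1⟩⟩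

/-- let `D ⊆ ℂⁿ` be a bounded domain with connected smooth boundary and
`L ⊆ ∂D` compact with `A(D)`-hull `ĤL` satisfying `ĤL ∩ ∂D = L`.  If `∂D ∖ L` is
connected, then `D ∖ ĤL` is connected. -/
theorem complement_of_hull_connected (n : ℕ)
    (D L : Set (EuclideanSpace ℂ (Fin n)))
    (hDopen : IsOpen D) (hDconn : IsConnected D) (hDbd : Bornology.IsBounded D)
    (hDsmooth : HasSmoothBoundary n D) (hbdry_conn : IsConnected (frontier D))
    (hL : L ⊆ frontier D) (hLc : IsCompact L)
    (hhull : hullA n D L ∩ frontier D = L)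
    (hconn : IsConnected (frontier D \ L)) :
    IsConnected (D \ hullA n D L) :=
  complement_of_hull_connected_general n D L hDopen hDbd hDsmooth hL hhull hconn
end
end

section
/- In ℂⁿ with n ≥ 5, let L = ∂𝔹ⁿ ∩ {z_{n−2} = z_{n−1} = z_n = 0}, whose A(𝔹ⁿ)-hull ĤL contains the set {z_{n−2} = z_{n−1} = z_n = 0, |z'| ≤ 1}. The set Y = ⋃_{k ∈ ℤ, k ≠ 0} {z ∈ 𝔹ⁿ : z_{n−2} = z_{n−1} = 0, z_n = 1/k} is a closed analytic subset of 𝔹ⁿ ∖ ĤL that does not extend to a closed analytic subset of 𝔹ⁿ ∖ L: its closure in 𝔹ⁿ ∖ L is not analytic at points of (ĤL ∖ L) ∩ {z_{n−2} = z_{n−1} = z_n = 0}. -/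
open Complex Metric Set

noncomputable section

/-- `T` is an analytic subset of `B`: locally in `B` it is the common zero set of a
family of holomorphic functions. -/
def IsAnalyticSubset (n : ℕ) (B T : Set (EuclideanSpace ℂ (Fin n))) : Prop :=
  T ⊆ B ∧ ∀ z ∈ B, ∃ U : Set (EuclideanSpace ℂ (Fin n)), IsOpen U ∧ z ∈ U ∧ U ⊆ B ∧
    ∃ (ι : Type) (g : ι → EuclideanSpace ℂ (Fin n) → ℂ),
      (∀ i, DifferentiableOn ℂ (g i) U) ∧ T ∩ U = {w ∈ U | ∀ i, g i w = 0}

/-- The coordinate subspace `{z_{n−2} = z_{n−1} = z_n = 0}` (the last three coordinates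
vanish; `0`-based indices `n−3, n−2, n−1`). -/
def lastThreeZero (n : ℕ) : Set (EuclideanSpace ℂ (Fin n)) :=
  {z | ∀ i : Fin n, n - 3 ≤ (i : ℕ) → z i = 0}

/-- `L = ∂𝔹ⁿ ∩ {z_{n−2} = z_{n−1} = z_n = 0}`. -/
def sphereCap (n : ℕ) : Set (EuclideanSpace ℂ (Fin n)) :=
  Metric.sphere (0 : EuclideanSpace ℂ (Fin n)) 1 ∩ lastThreeZero n

/-!
The hull `ĤL` is exactly the closed disc `{z_{n−2} = z_{n−1} = z_n = 0, ‖z‖ ≤ 1}`: the last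
three coordinate functions vanish on `L`, and the maximum principle on that complex subspace gives
the reverse inclusion. Off this disc `z_n ≠ 0`, and the values `1/k` accumulate only at `0`, so
near each of its points `Y` is a single affine slice. An analytic subset of `𝔹ⁿ ∖ L` extending
`Y` is, near the origin, the zero set of holomorphic functions vanishing at the points `1/k` of
the `z_n`-axis, hence on a whole disc of that axis by the identity theorem; but the non-real
points of that disc lie off the hull and not in `Y`.
-/

open Filter Topology

theorem norm_le_sSup_norm_sphere_inter_submodule {E : Type*} [NormedAddCommGroup E]
    [NormedSpace ℂ E] [ProperSpace E] (K : Submodule ℂ E) [Nontrivial K]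
    {f : E → ℂ} (hf : DiffContOnCl ℂ f (ball 0 1)) {z : E} (hzK : z ∈ K) (hz : ‖z‖ ≤ 1) :
    ‖f z‖ ≤ sSup ((fun w => ‖f w‖) '' (sphere 0 1 ∩ K)) := by
  have hbdd : BddAbove ((fun w => ‖f w‖) '' (sphere 0 1 ∩ K)) :=
    ((isCompact_closedBall (0 : E) 1).bddAbove_image hf.continuousOn_ball.norm).mono
      (image_mono fun w hw => sphere_subset_closedBall hw.1)
  have hfK : DiffContOnCl ℂ (f ∘ K.subtypeL) (ball 0 1) :=
    hf.comp K.subtypeL.differentiable.diffContOnCl fun w hw => by simpa using hw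
  refine Complex.norm_le_of_forall_mem_frontier_norm_le (z := ⟨z, hzK⟩) isBounded_ball hfK
    (fun w hw => le_csSup hbdd ⟨w, ⟨?_, w.2⟩, rfl⟩) ?_
  · simpa [frontier_ball (0 : K) one_ne_zero] using hw
  · simpa [closure_ball (0 : K) one_ne_zero] using hz

section Hull

variable {n : ℕ}

theorem hullA_subset_lastThreeZero {D L : Set (EuclideanSpace ℂ (Fin n))}
    (hL : L ⊆ lastThreeZero n) : hullA n D L ⊆ lastThreeZero n := by
  intro z hz i hi
  have hcoord : (fun w : EuclideanSpace ℂ (Fin n) => w i) ∈ Aalg n D :=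
    ⟨(EuclideanSpace.proj i).continuous.continuousOn,
      (EuclideanSpace.proj (𝕜 := ℂ) i).differentiable.differentiableOn⟩
  have hsup : sSup ((fun w : EuclideanSpace ℂ (Fin n) => ‖w i‖) '' L) ≤ 0 :=
    Real.sSup_nonpos <| by rintro _ ⟨w, hw, rfl⟩; simp [hL hw i hi]
  exact norm_le_zero_iff.1 ((hz.2 _ hcoord).trans hsup)

def lastThreeSubmodule (n : ℕ) : Submodule ℂ (EuclideanSpace ℂ (Fin n)) where
  carrier := lastThreeZero n
  add_mem' ha hb i hi := by simp [ha i hi, hb i hi]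
  zero_mem' i hi := by simp
  smul_mem' c _ ha i hi := by simp [ha i hi]

theorem isClosed_lastThreeZero : IsClosed (lastThreeZero n) :=
  (lastThreeSubmodule n).closed_of_finiteDimensional

theorem single_zero_mem_lastThreeZero (hn : 4 ≤ n) :
    EuclideanSpace.single (⟨0, by omega⟩ : Fin n) (1 : ℂ) ∈ lastThreeZero n := by
  intro i hi
  rw [PiLp.single_apply, if_neg (fun h => by simp [h] at hi; omega)]

theorem subset_hullA_sphereCap (hn : 4 ≤ n) :
    {z : EuclideanSpace ℂ (Fin n) | z ∈ lastThreeZero n ∧ ‖z‖ ≤ 1} ⊆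
      hullA n (ball 0 1) (sphereCap n) := by
  rintro z ⟨hzK, hz⟩
  have : Nontrivial (lastThreeSubmodule n) :=
    Submodule.nontrivial_iff_ne_bot.2 <| (Submodule.ne_bot_iff _).2
      ⟨_, single_zero_mem_lastThreeZero hn, by simp⟩
  refine ⟨by rwa [closure_ball _ one_ne_zero, mem_closedBall_zero_iff], fun f hf => ?_⟩
  exact norm_le_sSup_norm_sphere_inter_submodule (lastThreeSubmodule n) ⟨hf.2, hf.1⟩ hzK hz

theorem hullA_ball_sphereCap (hn : 4 ≤ n) :
    hullA n (ball 0 1) (sphereCap n) =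
      {z : EuclideanSpace ℂ (Fin n) | z ∈ lastThreeZero n ∧ ‖z‖ ≤ 1} := by
  refine Subset.antisymm (fun z hz => ⟨hullA_subset_lastThreeZero inter_subset_right hz, ?_⟩)
    (subset_hullA_sphereCap hn)
  simpa [closure_ball _ one_ne_zero] using hz.1

theorem ball_diff_hullA_sphereCap (hn : 4 ≤ n) :
    ball 0 1 \ hullA n (ball 0 1) (sphereCap n) = ball 0 1 \ lastThreeZero n := by
  ext z
  simp only [hullA_ball_sphereCap hn, Set.mem_sdiff]
  exact and_congr_right fun hz => by simp [(mem_ball_zero_iff.1 hz).le]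

end Hull

section IsolatedLimit

variable {ι X : Type*} [TopologicalSpace X] [T2Space X] {f : ι → X} {x : X}

theorem closure_range_subset_insert_of_tendsto_cofinite (hf : Tendsto f cofinite (𝓝 x)) :
    closure (range f) ⊆ insert x (range f) :=
  hf.isCompact_insert_range_of_cofinite.isClosed.closure_subset_iff.2 (subset_insert _ _)

theorem notMem_closure_range_diff_of_tendsto_cofinite (hf : Tendsto f cofinite (𝓝 x))
    {y : X} (hy : y ≠ x) : y ∉ closure (range f \ {y}) := by
  have hrange : range f \ {y} = range (fun k : {k // f k ≠ y} => f k) := by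
    ext z
    constructor
    · rintro ⟨⟨k, rfl⟩, hk⟩
      exact ⟨⟨k, hk⟩, rfl⟩
    · rintro ⟨k, rfl⟩
      exact ⟨mem_range_self _, k.2⟩
  rw [hrange]
  intro hcl
  rcases closure_range_subset_insert_of_tendsto_cofinite
    (hf.comp Subtype.val_injective.tendsto_cofinite) hcl with h | ⟨k, hk⟩
  exacts [hy h, k.2 hk]

end IsolatedLimit

section Reciprocals

def recipInts : Set ℂ := {t | ∃ k : ℤ, k ≠ 0 ∧ t = (k : ℂ)⁻¹}

theorem tendsto_intCast_inv_cofinite : Tendsto (fun k : ℤ => (k : ℂ)⁻¹) cofinite (𝓝 0) := by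
  have hreal : Tendsto (fun k : ℤ => (k : ℝ)⁻¹) cofinite (𝓝 0) :=
    tendsto_inv₀_cobounded.comp (Metric.cobounded_eq_cocompact (α := ℝ) ▸ Int.tendsto_coe_cofinite)
  have := (continuous_ofReal.tendsto 0).comp hreal
  simpa [Function.comp_def] using this

theorem tendsto_intCast_inv_atTop_nhdsNE :
    Tendsto (fun k : ℤ => (k : ℂ)⁻¹) atTop (𝓝[≠] 0) :=
  tendsto_nhdsWithin_iff.2 ⟨tendsto_intCast_inv_cofinite.mono_left (Int.cofinite_eq ▸ le_sup_right),
    (eventually_ne_atTop 0).mono fun k hk => by simpa using hk⟩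

theorem recipInts_subset_range : recipInts ⊆ range (fun k : ℤ => (k : ℂ)⁻¹) := by
  rintro _ ⟨k, -, rfl⟩
  exact ⟨k, rfl⟩

theorem closure_recipInts_subset : closure recipInts ⊆ insert 0 recipInts := by
  refine (closure_mono recipInts_subset_range).trans <|
    (closure_range_subset_insert_of_tendsto_cofinite tendsto_intCast_inv_cofinite).trans ?_
  rintro _ (rfl | ⟨k, rfl⟩)
  · exact mem_insert _ _
  · rcases eq_or_ne k 0 with rfl | hk
    · simp
    · exact mem_insert_of_mem _ ⟨k, hk, rfl⟩

theorem ne_zero_of_mem_recipInts {t : ℂ} (ht : t ∈ recipInts) : t ≠ 0 := by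
  obtain ⟨k, hk, rfl⟩ := ht
  simpa using hk

theorem notMem_closure_recipInts_diff {s : ℂ} (hs : s ∈ recipInts) :
    s ∉ closure (recipInts \ {s}) := fun h =>
  notMem_closure_range_diff_of_tendsto_cofinite tendsto_intCast_inv_cofinite
    (ne_zero_of_mem_recipInts hs) (closure_mono (sdiff_subset_sdiff_left recipInts_subset_range) h)

theorem im_eq_zero_of_mem_recipInts {t : ℂ} (ht : t ∈ recipInts) : t.im = 0 := by
  obtain ⟨k, -, rfl⟩ := ht
  simp

end Reciprocals

section AnalyticSubsets

variable {n : ℕ}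

def HasLocalEquationsAt (T : Set (EuclideanSpace ℂ (Fin n))) (z : EuclideanSpace ℂ (Fin n)) :
    Prop :=
  ∃ V : Set (EuclideanSpace ℂ (Fin n)), IsOpen V ∧ z ∈ V ∧
    ∃ (ι : Type) (g : ι → EuclideanSpace ℂ (Fin n) → ℂ),
      (∀ i, DifferentiableOn ℂ (g i) V) ∧ T ∩ V = {w ∈ V | ∀ i, g i w = 0}

theorem isAnalyticSubset_of_hasLocalEquationsAt {Ω T : Set (EuclideanSpace ℂ (Fin n))}
    (hΩ : IsOpen Ω) (hT : closure T ∩ Ω = T) (hloc : ∀ z ∈ T, HasLocalEquationsAt T z) :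
    IsAnalyticSubset n Ω T := by
  refine ⟨hT ▸ inter_subset_right, fun z hz => ?_⟩
  by_cases hzT : z ∈ T
  · obtain ⟨V, hV, hzV, ι, g, hg, hTV⟩ := hloc z hzT
    refine ⟨V ∩ Ω, hV.inter hΩ, ⟨hzV, hz⟩, inter_subset_right, ι, g,
      fun i => (hg i).mono inter_subset_left, ?_⟩
    rw [← inter_assoc, hTV]
    ext w
    simp only [mem_inter_iff, mem_ofPred_eq]
    tauto
  · have hzT' : z ∉ closure T := fun h => hzT (hT ▸ ⟨h, hz⟩)
    refine ⟨Ω \ closure T, hΩ.sdiff isClosed_closure, ⟨hz, hzT'⟩, sdiff_subset, Unit,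
      fun _ _ => 1, fun _ => differentiableOn_const 1, ?_⟩
    ext w
    simp only [mem_inter_iff, Set.mem_sdiff, mem_ofPred_eq, one_ne_zero, forall_const,
      and_false, iff_false, not_and, not_not]
    exact fun hw _ => subset_closure hw

theorem IsAnalyticSubset.eventually_mem_of_frequently_mem {B T : Set (EuclideanSpace ℂ (Fin n))}
    (hT : IsAnalyticSubset n B T) {φ : ℂ → EuclideanSpace ℂ (Fin n)} (hφ : Differentiable ℂ φ)
    {t₀ : ℂ} (ht₀ : φ t₀ ∈ B) (hfreq : ∃ᶠ t in 𝓝[≠] t₀, φ t ∈ T) : ∀ᶠ t in 𝓝 t₀, φ t ∈ T := by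
  obtain ⟨U, hU, hφU, -, ι, g, hg, hTU⟩ := hT.2 _ ht₀
  obtain ⟨r, hr, hrU⟩ := Metric.isOpen_iff.1 (hU.preimage hφ.continuous) t₀ hφU
  have hfreqU : ∃ᶠ t in 𝓝[≠] t₀, φ t ∈ T ∩ U :=
    hfreq.and_eventually <| eventually_nhdsWithin_of_eventually_nhds <|
      (hU.preimage hφ.continuous).mem_nhds hφU
  rw [hTU] at hfreqU
  -- One disc for all `i` at once: the family `g` may be infinite.
  have hzero : ∀ i, EqOn (g i ∘ φ) 0 (ball t₀ r) := fun i =>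
    have hana : AnalyticOnNhd ℂ (g i ∘ φ) (ball t₀ r) :=
      ((hg i).comp hφ.differentiableOn hrU).analyticOnNhd isOpen_ball
    hana.eqOn_zero_of_preconnected_of_frequently_eq_zero (convex_ball t₀ r).isPreconnected
      (mem_ball_self hr) (hfreqU.mono fun _ ht => ht.2 i)
  filter_upwards [ball_mem_nhds t₀ hr] with t ht
  have htTU : φ t ∈ T ∩ U := hTU ▸ ⟨hrU ht, fun i => hzero i ht⟩
  exact htTU.1

end AnalyticSubsets

section Slices

variable {n : ℕ}

theorem mem_lastThreeZero_iff (hn : 0 < n) {z : EuclideanSpace ℂ (Fin n)} :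
    z ∈ lastThreeZero n ↔
      (∀ i : Fin n, n - 3 ≤ (i : ℕ) → (i : ℕ) ≤ n - 2 → z i = 0) ∧ z ⟨n - 1, by omega⟩ = 0 := by
  refine ⟨fun h => ⟨fun i hi _ => h i hi, h _ (by simp; omega)⟩, fun ⟨hQ, hc⟩ i hi => ?_⟩
  by_cases hi' : (i : ℕ) ≤ n - 2
  · exact hQ i hi hi'
  · rwa [show i = ⟨n - 1, by omega⟩ from Fin.ext (by have := i.isLt; simp; omega)]

/-- The set `Y`; with `0`-based indices, `⟨n - 1, _⟩ : Fin n` is the coordinate `z_n`. -/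
def slices (n : ℕ) (hn : 4 ≤ n) : Set (EuclideanSpace ℂ (Fin n)) :=
  {z | z ∈ ball 0 1 ∧ ∃ k : ℤ, k ≠ 0 ∧ z ⟨n - 1, by omega⟩ = (k : ℂ)⁻¹ ∧
    ∀ i : Fin n, n - 3 ≤ (i : ℕ) → (i : ℕ) ≤ n - 2 → z i = 0}

theorem mem_slices_iff (hn : 4 ≤ n) {z : EuclideanSpace ℂ (Fin n)} :
    z ∈ slices n hn ↔ z ∈ ball 0 1 ∧ z ⟨n - 1, by omega⟩ ∈ recipInts ∧
      ∀ i : Fin n, n - 3 ≤ (i : ℕ) → (i : ℕ) ≤ n - 2 → z i = 0 :=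
  ⟨fun ⟨hB, k, hk, hc, hQ⟩ => ⟨hB, ⟨k, hk, hc⟩, hQ⟩,
    fun ⟨hB, ⟨k, hk, hc⟩, hQ⟩ => ⟨hB, k, hk, hc, hQ⟩⟩

theorem slices_subset (hn : 4 ≤ n) : slices n hn ⊆ ball 0 1 \ lastThreeZero n := fun z hz =>
  have ⟨hB, hS, _⟩ := (mem_slices_iff hn).1 hz
  ⟨hB, fun h => ne_zero_of_mem_recipInts hS ((mem_lastThreeZero_iff (by omega)).1 h).2⟩

theorem closure_slices_inter (hn : 4 ≤ n) :
    closure (slices n hn) ∩ (ball 0 1 \ lastThreeZero n) = slices n hn := by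
  refine Subset.antisymm ?_ fun z hz => ⟨subset_closure hz, slices_subset hn hz⟩
  rintro z ⟨hzY, hzB, hzP⟩
  have hQ : ∀ i : Fin n, n - 3 ≤ (i : ℕ) → (i : ℕ) ≤ n - 2 → z i = 0 := fun i h₁ h₂ =>
    closure_minimal (fun w hw => ((mem_slices_iff hn).1 hw).2.2 i h₁ h₂)
      (isClosed_eq (EuclideanSpace.proj (𝕜 := ℂ) i).continuous continuous_const) hzY
  have hc : z ⟨n - 1, by omega⟩ ∈ closure recipInts :=
    map_mem_closure (f := fun w : EuclideanSpace ℂ (Fin n) => w ⟨n - 1, by omega⟩)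
      (EuclideanSpace.proj (𝕜 := ℂ) _).continuous hzY
      fun w hw => ((mem_slices_iff hn).1 hw).2.1
  rcases closure_recipInts_subset hc with h0 | hS
  · exact absurd ((mem_lastThreeZero_iff (by omega)).2 ⟨hQ, h0⟩) hzP
  · exact (mem_slices_iff hn).2 ⟨hzB, hS, hQ⟩

theorem hasLocalEquationsAt_slices (hn : 4 ≤ n) {z : EuclideanSpace ℂ (Fin n)}
    (hz : z ∈ slices n hn) : HasLocalEquationsAt (slices n hn) z := by
  set c : Fin n := ⟨n - 1, by omega⟩
  obtain ⟨hzB, hs, -⟩ := (mem_slices_iff hn).1 hz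
  refine ⟨ball 0 1 ∩ (fun w => w c) ⁻¹' (closure (recipInts \ {z c}))ᶜ,
    isOpen_ball.inter (isClosed_closure.isOpen_compl.preimage
      (EuclideanSpace.proj (𝕜 := ℂ) c).continuous),
    ⟨hzB, notMem_closure_recipInts_diff hs⟩,
    Option {i : Fin n // n - 3 ≤ (i : ℕ) ∧ (i : ℕ) ≤ n - 2},
    fun o w => o.elim (w c - z c) (fun i => w i), ?_, ?_⟩
  · rintro (_ | i)
    · exact ((EuclideanSpace.proj (𝕜 := ℂ) c).differentiable.sub_const _).differentiableOn
    · exact (EuclideanSpace.proj (𝕜 := ℂ) (i : Fin n)).differentiable.differentiableOn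
  · ext w
    simp only [mem_inter_iff, mem_ofPred_eq, Option.forall, Option.elim, sub_eq_zero,
      mem_slices_iff hn, mem_preimage, mem_compl_iff]
    constructor
    · rintro ⟨⟨-, hwS, hwQ⟩, hwB, hwW⟩
      have hwc : w c = z c := by_contra fun h => hwW (subset_closure ⟨hwS, h⟩)
      exact ⟨⟨hwB, hwW⟩, hwc, fun i => hwQ i i.2.1 i.2.2⟩
    · rintro ⟨⟨hwB, hwW⟩, hwc, hwQ⟩
      exact ⟨⟨hwB, hwc ▸ hs, fun i h₁ h₂ => hwQ ⟨i, h₁, h₂⟩⟩, hwB, hwW⟩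

theorem isAnalyticSubset_slices (hn : 4 ≤ n) :
    IsAnalyticSubset n (ball 0 1 \ lastThreeZero n) (slices n hn) :=
  isAnalyticSubset_of_hasLocalEquationsAt (isOpen_ball.sdiff isClosed_lastThreeZero)
    (closure_slices_inter hn) fun _ => hasLocalEquationsAt_slices hn

theorem smul_single_mem_slices_iff (hn : 4 ≤ n) (t : ℂ) :
    t • EuclideanSpace.single (⟨n - 1, by omega⟩ : Fin n) (1 : ℂ) ∈ slices n hn ↔
      ‖t‖ < 1 ∧ t ∈ recipInts := by
  rw [mem_slices_iff hn]
  simp only [mem_ball_zero_iff, norm_smul, PiLp.norm_single, norm_one, mul_one, PiLp.smul_apply,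
    PiLp.single_apply, if_pos, smul_eq_mul]
  refine and_congr_right fun _ => and_iff_left fun i _ hi => ?_
  rw [if_neg fun h => by rw [h] at hi; simp at hi; omega, mul_zero]

end Slices

theorem not_exists_isAnalyticSubset_extension_slices {n : ℕ} (hn : 4 ≤ n) :
    ¬ ∃ Y : Set (EuclideanSpace ℂ (Fin n)),
      IsAnalyticSubset n (ball 0 1 \ sphereCap n) Y ∧
        Y ∩ (ball 0 1 \ lastThreeZero n) = slices n hn := by
  rintro ⟨Y, hY, hYY⟩
  set c : Fin n := ⟨n - 1, by omega⟩
  set φ : ℂ → EuclideanSpace ℂ (Fin n) := fun t => t • EuclideanSpace.single c 1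
  have hφ : Differentiable ℂ φ := differentiable_id.smul_const _
  have h0 : φ 0 ∈ ball 0 1 \ sphereCap n := by simp [φ, sphereCap]
  have hfreq : ∃ᶠ t in 𝓝[≠] 0, φ t ∈ Y := by
    refine tendsto_intCast_inv_atTop_nhdsNE.frequently <|
      ((eventually_ge_atTop 2).mono fun k hk => ?_).frequently
    have hk' : (2 : ℝ) ≤ ‖(k : ℂ)‖ := by
      rw [norm_intCast]; exact_mod_cast hk.trans (le_abs_self k)
    have hmem : φ (k : ℂ)⁻¹ ∈ slices n hn := (smul_single_mem_slices_iff hn _).2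
      ⟨by rw [norm_inv]; exact inv_lt_one_of_one_lt₀ (by linarith), k, by omega, rfl⟩
    exact (hYY.symm ▸ hmem : φ _ ∈ Y ∩ _).1
  have hev : ∀ᶠ t in 𝓝 0, φ t ∈ Y ∧ φ t ∈ ball 0 1 :=
    (hY.eventually_mem_of_frequently_mem hφ h0 hfreq).and
      (hφ.continuous.continuousAt.preimage_mem_nhds (isOpen_ball.mem_nhds h0.1))
  have hevI : ∀ᶠ r : ℝ in 𝓝[>] 0, φ (r * I) ∈ Y ∧ φ (r * I) ∈ ball 0 1 :=
    (((continuous_ofReal.mul continuous_const).tendsto' 0 0 (by simp)).eventually hev).filter_mono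
      nhdsWithin_le_nhds
  obtain ⟨r, ⟨hrY, hrB⟩, hr⟩ := (hevI.and self_mem_nhdsWithin).exists
  have hrP : φ (r * I) ∉ lastThreeZero n := fun h => by
    have hc := ((mem_lastThreeZero_iff (by omega)).1 h).2
    simp [φ, c, hr.ne'] at hc
  have hmem : φ (r * I) ∈ slices n hn := hYY ▸ ⟨hrY, hrB, hrP⟩
  have him := im_eq_zero_of_mem_recipInts ((smul_single_mem_slices_iff hn _).1 hmem).2
  simp [hr.ne'] at him

/-- in `ℂⁿ`, `n ≥ 5`, with `L = ∂𝔹ⁿ ∩ {z_{n−2} = z_{n−1} = z_n = 0}`, the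
`A(𝔹ⁿ)`-hull `ĤL` contains `{z_{n−2} = z_{n−1} = z_n = 0, |z| ≤ 1}`; the locally finite
union `Y = ⋃_{k ≠ 0} {z ∈ 𝔹ⁿ : z_{n−2} = z_{n−1} = 0, z_n = 1/k}` is a closed analytic
subset of `𝔹ⁿ ∖ ĤL` that does not extend to a closed analytic subset of `𝔹ⁿ ∖ L`. -/
theorem codim_three_slices_not_removable (n : ℕ) (hn : 5 ≤ n) :
    ({z : EuclideanSpace ℂ (Fin n) | z ∈ lastThreeZero n ∧ ‖z‖ ≤ 1} ⊆
        hullA n (Metric.ball 0 1) (sphereCap n)) ∧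
    (closure {z : EuclideanSpace ℂ (Fin n) |
          z ∈ Metric.ball (0 : EuclideanSpace ℂ (Fin n)) 1 ∧
          ∃ k : ℤ, k ≠ 0 ∧ z ⟨n - 1, by omega⟩ = ((k : ℂ))⁻¹ ∧
            ∀ i : Fin n, n - 3 ≤ (i : ℕ) → (i : ℕ) ≤ n - 2 → z i = 0} ∩
        (Metric.ball 0 1 \ hullA n (Metric.ball 0 1) (sphereCap n)) =
      {z : EuclideanSpace ℂ (Fin n) |
          z ∈ Metric.ball (0 : EuclideanSpace ℂ (Fin n)) 1 ∧
          ∃ k : ℤ, k ≠ 0 ∧ z ⟨n - 1, by omega⟩ = ((k : ℂ))⁻¹ ∧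
            ∀ i : Fin n, n - 3 ≤ (i : ℕ) → (i : ℕ) ≤ n - 2 → z i = 0}) ∧
    IsAnalyticSubset n
      (Metric.ball 0 1 \ hullA n (Metric.ball 0 1) (sphereCap n))
      {z : EuclideanSpace ℂ (Fin n) |
          z ∈ Metric.ball (0 : EuclideanSpace ℂ (Fin n)) 1 ∧
          ∃ k : ℤ, k ≠ 0 ∧ z ⟨n - 1, by omega⟩ = ((k : ℂ))⁻¹ ∧
            ∀ i : Fin n, n - 3 ≤ (i : ℕ) → (i : ℕ) ≤ n - 2 → z i = 0} ∧
    ¬ ∃ Y' : Set (EuclideanSpace ℂ (Fin n)),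
        closure Y' ∩ (Metric.ball 0 1 \ sphereCap n) = Y' ∧
        IsAnalyticSubset n (Metric.ball 0 1 \ sphereCap n) Y' ∧
        Y' ∩ (Metric.ball 0 1 \ hullA n (Metric.ball 0 1) (sphereCap n)) =
          {z : EuclideanSpace ℂ (Fin n) |
              z ∈ Metric.ball (0 : EuclideanSpace ℂ (Fin n)) 1 ∧
              ∃ k : ℤ, k ≠ 0 ∧ z ⟨n - 1, by omega⟩ = ((k : ℂ))⁻¹ ∧
                ∀ i : Fin n, n - 3 ≤ (i : ℕ) → (i : ℕ) ≤ n - 2 → z i = 0} := by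
  have hn4 : 4 ≤ n := by omega
  rw [ball_diff_hullA_sphereCap hn4]
  exact ⟨subset_hullA_sphereCap hn4, closure_slices_inter hn4, isAnalyticSubset_slices hn4,
    fun ⟨Y', _, hY', hYY⟩ => not_exists_isAnalyticSubset_extension_slices hn4 ⟨Y', hY', hYY⟩⟩
end
end
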